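/- Let π be an admissible symmetric matrix and let c be its pair-factorized triplet weights. For integers y ≥ 3 and x, z ≥ 1 with π(x,y) > 0, define ℓ(x,y,z) := (y−2) · (∑_{v≥1} (c(x,y,v) + c(v,y,z))/v) / (∑_{v≥1} (c(x,y,v) + c(v,y,z))), and define m(x,y) := (1/((y−2)·π(x,y))) · ∑_{z≥1} c(x,y,z)·ℓ(x,y,z). Then ℓ(x,y,z) = (y−2)·h(y)/(y−1) for every z ≥ 1, and m(x,y) = h(y). -/

import Mathlib

open scoped BigOperators

/-- `π(x) = ∑_{y≥1} π(x,y)`, the row sum. -/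
noncomputable def rowSum (p : ℕ → ℕ → ℝ) (x : ℕ) : ℝ := ∑' y : ℕ, p x (y + 1)

/-- An admissible symmetric matrix: nonnegative, symmetric, summable, with
positive row sums. -/
def AdmissibleSym (p : ℕ → ℕ → ℝ) : Prop :=
  (∀ x y, 0 ≤ p x y) ∧ (∀ x y, p x y = p y x) ∧
    Summable (fun xy : ℕ × ℕ => p (xy.1 + 1) (xy.2 + 1)) ∧
    (∀ x : ℕ, 1 ≤ x → 0 < rowSum p x)

/-- `h(x) = (x−1)·∑_{y≥1} π(x,y)/(y·π(x))`. -/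
noncomputable def hPS (p : ℕ → ℕ → ℝ) (x : ℕ) : ℝ :=
  ((x : ℝ) - 1) * ∑' y : ℕ, p x (y + 1) / (((y : ℝ) + 1) * rowSum p x)

/-- The pair-factorized triplet weights `c(x,y,z) = (y−1)·π(x,y)·π(y,z)/π(y)`. -/
noncomputable def cTrip (p : ℕ → ℕ → ℝ) (x y z : ℕ) : ℝ :=
  ((y : ℝ) - 1) * p x y * p y z / rowSum p y

/-- `ℓ(x,y,z)` from the triplet approximation. -/
noncomputable def ellTrip (p : ℕ → ℕ → ℝ) (x y z : ℕ) : ℝ :=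
  ((y : ℝ) - 2) *
      (∑' v : ℕ, (cTrip p x y (v + 1) + cTrip p (v + 1) y z) / ((v : ℝ) + 1)) /
    (∑' v : ℕ, (cTrip p x y (v + 1) + cTrip p (v + 1) y z))

/-- `m(x,y)` from the triplet approximation. -/
noncomputable def mTrip (p : ℕ → ℕ → ℝ) (x y : ℕ) : ℝ :=
  (1 / (((y : ℝ) - 2) * p x y)) * ∑' z : ℕ, cTrip p x y (z + 1) * ellTrip p x y (z + 1)

/-! By symmetry of `π`, the combined weight `c(x,y,v) + c(v,y,z)` is a constant multiple of the
row `π(y,v)`. Hence `ℓ(x,y,z)/(y−2)` is the mean of `1/v` under `π(y,·)/π(y)`, which is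
`h(y)/(y−1)` whatever `x` and `z` are; and since `∑_z c(x,y,z) = (y−1)·π(x,y)`, averaging this
constant in the definition of `m` gives `h(y)`. -/

variable {p : ℕ → ℕ → ℝ}

lemma hPS_eq_mul_tsum_div (y : ℕ) :
    hPS p y = ((y : ℝ) - 1) * (∑' v : ℕ, p y (v + 1) / ((v : ℝ) + 1)) / rowSum p y := by
  simp_rw [hPS, ← div_div, tsum_div_const]
  ring

lemma cTrip_add_cTrip_eq_mul (hsym : ∀ a b, p a b = p b a) (x y z v : ℕ) :
    cTrip p x y v + cTrip p v y z = ((y : ℝ) - 1) * (p x y + p y z) / rowSum p y * p y v := by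
  rw [cTrip, cTrip, hsym v y]
  ring

lemma ellTrip_eq (hsym : ∀ a b, p a b = p b a) {x y z : ℕ} (hy : (y : ℝ) - 1 ≠ 0)
    (hxyz : p x y + p y z ≠ 0) (hR : rowSum p y ≠ 0) :
    ellTrip p x y z = ((y : ℝ) - 2) * hPS p y / ((y : ℝ) - 1) := by
  simp_rw [ellTrip, cTrip_add_cTrip_eq_mul hsym, mul_div_assoc, tsum_mul_left,
    hPS_eq_mul_tsum_div]
  rw [← rowSum]
  field_simp

lemma tsum_cTrip_right {y : ℕ} (hR : rowSum p y ≠ 0) (x : ℕ) :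
    ∑' z : ℕ, cTrip p x y (z + 1) = ((y : ℝ) - 1) * p x y := by
  simp_rw [cTrip, mul_div_assoc, tsum_mul_left, tsum_div_const]
  rw [← rowSum, div_self hR, mul_one]

lemma mTrip_eq_of_forall_ellTrip_eq {x y : ℕ} {L : ℝ} (hR : rowSum p y ≠ 0) (hxy : p x y ≠ 0)
    (hell : ∀ z, 1 ≤ z → ellTrip p x y z = L) :
    mTrip p x y = ((y : ℝ) - 1) * L / ((y : ℝ) - 2) := by
  have hterm (z : ℕ) : cTrip p x y (z + 1) * ellTrip p x y (z + 1) = cTrip p x y (z + 1) * L := by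
    rw [hell (z + 1) (Nat.le_add_left 1 z)]
  rw [mTrip, tsum_congr hterm, tsum_mul_right, tsum_cTrip_right hR]
  field_simp

theorem ell_eq_and_m_eq_h_of_pair_factorized_general
    (p : ℕ → ℕ → ℝ) (hp : AdmissibleSym p)
    (x y : ℕ) (hy : 3 ≤ y) (hpos : 0 < p x y) :
    (∀ z : ℕ, 1 ≤ z →
      ellTrip p x y z = ((y : ℝ) - 2) * hPS p y / ((y : ℝ) - 1)) ∧
    mTrip p x y = hPS p y := by
  obtain ⟨hnn, hsym, -, hrow⟩ := hp
  have hy' : (3 : ℝ) ≤ y := by exact_mod_cast hy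
  have hy1 : (y : ℝ) - 1 ≠ 0 := by linarith
  have hy2 : (y : ℝ) - 2 ≠ 0 := by linarith
  have hR : rowSum p y ≠ 0 := (hrow y (by omega)).ne'
  have hell (z : ℕ) : ellTrip p x y z = ((y : ℝ) - 2) * hPS p y / ((y : ℝ) - 1) :=
    ellTrip_eq hsym hy1 (add_pos_of_pos_of_nonneg hpos (hnn y z)).ne' hR
  refine ⟨fun z _ => hell z, ?_⟩
  rw [mTrip_eq_of_forall_ellTrip_eq hR hpos.ne' (fun z _ => hell z)]
  field_simp

theorem ell_eq_and_m_eq_h_of_pair_factorized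
    (p : ℕ → ℕ → ℝ) (hp : AdmissibleSym p)
    (x y : ℕ) (hy : 3 ≤ y) (hx : 1 ≤ x) (hpos : 0 < p x y) :
    (∀ z : ℕ, 1 ≤ z →
      ellTrip p x y z = ((y : ℝ) - 2) * hPS p y / ((y : ℝ) - 1)) ∧
    mTrip p x y = hPS p y :=
  ell_eq_and_m_eq_h_of_pair_factorized_general p hp x y hy hpos
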